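/- arXiv:2510.15498 — 2 statements merged into one kernel-verified Lean document; each statement's English description precedes it below -/
import Mathlib

section
/- Define the truncated Sierpinski series S_n(T,U) := Σ_{m=0}^{n} U^{2^m}/(h₀ h₁ ⋯ h_m) in Q(T,U), where h₀ = T and h_{m+1} = h_m² - 2U^{2^m}. Then for all n ≥ 0, F^{(n+1)}(0) = S_n(T,U) and F^{(n+1)}(T) = T - S_n(T,U) hold as identities in Q(T,U), where F is the Newton iterator of X² - TX + U. -/
noncomputable section
namespace Paper
open MvPolynomial Finset

abbrev K : Type := FractionRing (MvPolynomial (Fin 2) ℚ)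

def T : K := algebraMap (MvPolynomial (Fin 2) ℚ) K (X 0)
def U : K := algebraMap (MvPolynomial (Fin 2) ℚ) K (X 1)

/-- The Newton iterator of `f = X² - T·X + U`. -/
def F (x : K) : K := (x ^ 2 - U) / (2 * x - T)

/-- `h 0 = T`, `h (n+1) = h n ² - 2 U^(2^n)`. -/
def h : ℕ → K
  | 0 => T
  | n + 1 => h n ^ 2 - 2 * U ^ 2 ^ n

/-- The truncated Sierpinski series `S n = Σ_{m=0}^{n} U^(2^m)/(h₀ h₁ ⋯ h_m)`. -/
def S (n : ℕ) : K :=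
  ∑ m ∈ Finset.range (n + 1), U ^ 2 ^ m / ∏ k ∈ Finset.range (m + 1), h k

def Hp : ℕ → MvPolynomial (Fin 2) ℚ
  | 0 => X 0
  | n + 1 => Hp n ^ 2 - 2 * (X 1) ^ 2 ^ n

lemma h_eq (n : ℕ) : h n = algebraMap (MvPolynomial (Fin 2) ℚ) K (Hp n) := by
  induction n with
  | zero => rfl
  | succ n ih => simp [h, Hp, ih, U, map_sub, map_pow, map_mul, map_ofNat]

lemma Hp_aeval (n : ℕ) :
    aeval ![Polynomial.X, (0 : Polynomial ℚ)] (Hp n) = Polynomial.X ^ 2 ^ n := by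
  induction n with
  | zero => simp [Hp]
  | succ n ih =>
    simp [Hp, ih, ← pow_mul, pow_succ]
    ring

lemma h_ne (n : ℕ) : h n ≠ 0 := by
  rw [h_eq]
  simp only [ne_eq, map_eq_zero_iff _ (IsFractionRing.injective (MvPolynomial (Fin 2) ℚ) K)]
  intro hc
  have := Hp_aeval n
  rw [hc] at this
  simp at this
  exact pow_ne_zero _ Polynomial.X_ne_zero this.symm

lemma P_ne (n : ℕ) : (∏ k ∈ Finset.range n, h k) ≠ 0 :=
  Finset.prod_ne_zero_iff.mpr fun k _ => h_ne k

lemma S_succ (n : ℕ) :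
    S (n + 1) = S n + U ^ 2 ^ (n + 1) / ∏ k ∈ Finset.range (n + 2), h k := by
  rw [S, Finset.sum_range_succ]; rfl

lemma A (n : ℕ) : T - 2 * S n = h (n + 1) / ∏ k ∈ Finset.range (n + 1), h k := by
  induction n with
  | zero =>
    have hT : T ≠ 0 := h_ne 0
    have hS0 : S 0 = U / T := by simp [S, h]
    have hp : (∏ k ∈ Finset.range (0 + 1), h k) = T := by simp [h]
    rw [hS0, hp, show h (0 + 1) = T ^ 2 - 2 * U ^ 2 ^ 0 from rfl]
    field_simp
    ring
  | succ n ih =>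
    have hP : (∏ k ∈ Finset.range (n + 1), h k) ≠ 0 := P_ne (n + 1)
    have hh : h (n + 1) ≠ 0 := h_ne (n + 1)
    have hs : S n = (T - h (n + 1) / ∏ k ∈ Finset.range (n + 1), h k) / 2 := by
      rw [← ih]; ring
    rw [S_succ, Finset.prod_range_succ (f := h) (n := n + 1),
      show h (n + 1 + 1) = h (n + 1) ^ 2 - 2 * U ^ 2 ^ (n + 1) from rfl, hs]
    field_simp
    ring

lemma B (n : ℕ) :
    S n ^ 2 - T * S n + U = U ^ 2 ^ (n + 1) / (∏ k ∈ Finset.range (n + 1), h k) ^ 2 := by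
  induction n with
  | zero =>
    have hT : T ≠ 0 := h_ne 0
    have hS0 : S 0 = U / T := by simp [S, h]
    have hp : (∏ k ∈ Finset.range (0 + 1), h k) = T := by simp [h]
    rw [hS0, hp, show (2:ℕ) ^ (0 + 1) = 2 by norm_num]
    field_simp
    ring
  | succ n ih =>
    have hA := A n
    have hP := P_ne (n + 1)
    have hh := h_ne (n + 1)
    rw [S_succ, Finset.prod_range_succ (f := h) (n := n + 1)]
    have expand : ∀ s u P : K, (s + u / P) ^ 2 - T * (s + u / P) + U
        = (s ^ 2 - T * s + U) + (2 * s - T) * (u / P) + (u / P) ^ 2 := by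
      intro s u P; ring
    rw [expand, ih]
    have h2 : (2 * S n - T) = -(h (n + 1) / ∏ k ∈ Finset.range (n + 1), h k) := by
      rw [← hA]; ring
    rw [h2]
    have e1 : (h (n + 1) / ∏ k ∈ Finset.range (n + 1), h k) *
        (U ^ 2 ^ (n + 1) / ((∏ k ∈ Finset.range (n + 1), h k) * h (n + 1)))
        = U ^ 2 ^ (n + 1) / (∏ k ∈ Finset.range (n + 1), h k) ^ 2 := by
      field_simp
    rw [neg_mul, e1, div_pow, ← pow_mul, ← pow_succ]
    ring

lemma key (n : ℕ) : (2 * S n - T) * S (n + 1) = S n ^ 2 - U := by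
  have hP : (∏ k ∈ Finset.range (n + 1), h k) ≠ 0 := P_ne (n + 1)
  have hh : h (n + 1) ≠ 0 := h_ne (n + 1)
  have hA : 2 * S n - T = -(h (n + 1) / ∏ k ∈ Finset.range (n + 1), h k) := by
    rw [← A n]; ring
  have hB := B n
  have e1 : (h (n + 1) / ∏ k ∈ Finset.range (n + 1), h k) *
      (U ^ 2 ^ (n + 1) / ((∏ k ∈ Finset.range (n + 1), h k) * h (n + 1)))
      = U ^ 2 ^ (n + 1) / (∏ k ∈ Finset.range (n + 1), h k) ^ 2 := by
    field_simp
  rw [S_succ, Finset.prod_range_succ (f := h) (n := n + 1), hA]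
  linear_combination (-(S n)) * hA + hB - e1

lemma hd_ne (n : ℕ) : 2 * S n - T ≠ 0 := by
  rw [show 2 * S n - T = -(T - 2 * S n) by ring, A n]
  exact neg_ne_zero.mpr (div_ne_zero (h_ne _) (P_ne _))

theorem stmt_5 (n : ℕ) :
    F^[n + 1] 0 = S n ∧ F^[n + 1] T = T - S n := by
  induction n with
  | zero =>
    have hT : T ≠ 0 := h_ne 0
    have hS0 : S 0 = U / T := by simp [S, h]
    constructor
    · show F 0 = S 0
      rw [F, hS0, show (0:K) ^ 2 - U = -U by ring, show 2 * (0:K) - T = -T by ring,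
        neg_div_neg_eq]
    · show F T = T - S 0
      rw [F, hS0, show 2 * T - T = T by ring, div_eq_iff hT]
      field_simp
  | succ n ih =>
    obtain ⟨ih1, ih2⟩ := ih
    have hd := hd_ne n
    constructor
    · rw [Function.iterate_succ_apply', ih1, F, div_eq_iff hd]
      linear_combination (-1 : K) * key n
    · rw [Function.iterate_succ_apply', ih2, F, div_eq_iff
        (show 2 * (T - S n) - T ≠ 0 by
          rw [show 2 * (T - S n) - T = -(2 * S n - T) by ring]
          exact neg_ne_zero.mpr hd)]
      linear_combination (-1 : K) * key n

end Paper
end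
end

section
/- Let F(X) = (X² - U)/(2X - T) be the Newton iterator of X² - TX + U in Q(T,U), and define b_n = -U^{-1}T for odd n ≥ 1 and b_n = T for even n ≥ 0. Then for all n ≥ 0, F^{(n)}(T) = [b₀; b₁, b₂, …, b_{2^n - 1}] as rational functions in Q(T,U). -/
noncomputable section
namespace Paper
open MvPolynomial Finset

/-- Partial denominators: `a 0 = 0`, `a n = U⁻¹T` for odd `n`, `a n = -T` for even `n ≥ 2`. -/
def a (n : ℕ) : K := if n = 0 then 0 else if Odd n then U⁻¹ * T else -T

/-- Partial denominators: `b n = T` for even `n`, `b n = -U⁻¹T` for odd `n`. -/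
def b (n : ℕ) : K := if Odd n then -(U⁻¹ * T) else T

/-- Continuant numerators, shifted by 2: `P k = p_{k-2}`, so `P 0 = p_{-2} = 0`,
`P 1 = p_{-1} = 1`, `P (n+2) = p_n = a n • p_{n-1} + p_{n-2}`. -/
def P : ℕ → K
  | 0 => 0
  | 1 => 1
  | n + 2 => a n * P (n + 1) + P n

/-- Continuant denominators, shifted by 2: `Q k = q_{k-2}`. -/
def Q : ℕ → K
  | 0 => 1
  | 1 => 0
  | n + 2 => a n * Q (n + 1) + Q n

/-- Continuant numerators for the `b`-continued fraction, shifted by 2: `R k = r_{k-2}`. -/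
def R : ℕ → K
  | 0 => 0
  | 1 => 1
  | n + 2 => b n * R (n + 1) + R n

/-- Continuant denominators for the `b`-continued fraction, shifted by 2: `Sd k = s_{k-2}`. -/
def Sd : ℕ → K
  | 0 => 1
  | 1 => 0
  | n + 2 => b n * Sd (n + 1) + Sd n

/-- The finite continued fraction `[x₀; x₁, …, x_m] = x₀ + 1/(x₁ + 1/(⋯ + 1/x_m))`
of a list `[x₀, x₁, …, x_m]`. -/
def cfList : List K → K
  | [] => 0
  | [x] => x
  | x :: y :: xs => x + (cfList (y :: xs))⁻¹

/-- polynomial Fibonacci-like sequence -/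
def sp : ℕ → MvPolynomial (Fin 2) ℚ
  | 0 => 0
  | 1 => 1
  | n + 2 => X 0 * sp (n + 1) - X 1 * sp n

def s (k : ℕ) : K := algebraMap (MvPolynomial (Fin 2) ℚ) K (sp k)

lemma s_zero : s 0 = 0 := by simp [s, sp]
lemma s_one : s 1 = 1 := by simp [s, sp]
lemma s_rec (n : ℕ) : s (n + 2) = T * s (n + 1) - U * s n := by
  simp [s, sp, T, U, map_sub, map_mul]

lemma sp_eval (k : ℕ) :
    eval (fun i : Fin 2 => if i = 0 then (3 : ℚ) else 2) (sp k) = 2 ^ k - 1 := by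
  induction k using Nat.twoStepInduction with
  | zero => simp [sp]
  | one => norm_num [sp]
  | more k ih1 ih2 =>
    simp only [sp, map_sub, map_mul, eval_X, ih1, ih2]
    norm_num
    ring

lemma s_ne (k : ℕ) (hk : 1 ≤ k) : s k ≠ 0 := by
  have hinj : Function.Injective (algebraMap (MvPolynomial (Fin 2) ℚ) K) :=
    IsFractionRing.injective _ _
  have hsp : sp k ≠ 0 := by
    intro h
    have := sp_eval k
    rw [h] at this
    simp at this
    have : (2:ℚ) ^ k ≥ 2 ^ 1 := by
      apply pow_le_pow_right₀ (by norm_num) hk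
    nlinarith [this]
  intro h
  exact hsp (hinj (by simpa [s] using h))

lemma U_ne : U ≠ 0 := by
  have hinj : Function.Injective (algebraMap (MvPolynomial (Fin 2) ℚ) K) :=
    IsFractionRing.injective _ _
  intro h
  exact MvPolynomial.X_ne_zero 1 (hinj (by simpa [U] using h))

lemma s_add (m n : ℕ) :
    s (m + n + 1) = s (m + 1) * s (n + 1) - U * s m * s n := by
  induction n using Nat.twoStepInduction generalizing m with
  | zero => simp [s_zero, s_one]
  | one =>
    have := s_rec m
    rw [show m + 1 + 1 = m + 2 from rfl, this, s_rec 0]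
    simp [s_zero, s_one]
    ring
  | more n ih1 ih2 =>
    have h1 := ih1 m
    have h2 := ih2 m
    have h3 := s_rec n
    have h4 := s_rec (n + 1)
    have h5 := s_rec (m + n + 1)
    have e1 : m + (n + 2) + 1 = m + n + 1 + 2 := by omega
    have e2 : m + n + 1 + 1 = m + (n + 1) + 1 := by omega
    have e3 : n + 2 + 1 = n + 1 + 2 := by omega
    have e4 : n + 1 + 1 = n + 2 := by omega
    rw [e1, h5, e2, h2, h1, e3, h4, e4, h3]
    ring

lemma s_double (k : ℕ) (hk : 1 ≤ k) :
    s (2 * k) = s k * (2 * s (k + 1) - T * s k) := by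
  obtain ⟨j, rfl⟩ : ∃ j, k = j + 1 := ⟨k - 1, by omega⟩
  have h1 := s_add (j + 1) j
  have h2 := s_rec j
  have e1 : 2 * (j + 1) = j + 1 + j + 1 := by omega
  have e2 : j + 1 + 1 = j + 2 := by omega
  rw [e1, h1, e2, h2]
  ring

lemma s_double_odd (k : ℕ) :
    s (2 * k + 1) = s (k + 1) ^ 2 - U * s k ^ 2 := by
  have h1 := s_add k k
  have e1 : 2 * k + 1 = k + k + 1 := by omega
  rw [e1, h1]
  ring

lemma F_double (k : ℕ) (hk : 1 ≤ k) :
    F (s (k + 1) / s k) = s (2 * k + 1) / s (2 * k) := by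
  have hsk : s k ≠ 0 := s_ne k hk
  have hs2k : s (2 * k) ≠ 0 := s_ne _ (by omega)
  have hd : 2 * s (k + 1) - T * s k ≠ 0 := by
    intro h
    rw [s_double k hk, h, mul_zero] at hs2k
    exact hs2k rfl
  have hden : 2 * (s (k + 1) / s k) - T ≠ 0 := by
    have : 2 * (s (k + 1) / s k) - T = (2 * s (k + 1) - T * s k) / s k := by
      field_simp
    rw [this]
    exact div_ne_zero hd hsk
  rw [F, s_double_odd, s_double k hk]
  rw [div_eq_div_iff hden (by exact mul_ne_zero hsk hd)]
  field_simp

lemma b_zero : b 0 = T := by simp [b]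
lemma b_one : b 1 = -(U⁻¹ * T) := by simp [b]
lemma b_two_add (n : ℕ) : b (n + 1 + 1) = b n := by
  simp [b, Nat.odd_add]

lemma cfList_cons (x y : K) (xs : List K) :
    cfList (x :: y :: xs) = x + (cfList (y :: xs))⁻¹ := rfl

lemma Lb_succ (k : ℕ) :
    (List.range (k + 1)).map b = b 0 :: (List.range k).map (fun i => b (i + 1)) := by
  rw [List.range_succ_eq_map]
  simp [List.map_map, Function.comp_def]

lemma Lc_succ (k : ℕ) :
    (List.range (k + 1)).map (fun i => b (i + 1)) = b 1 :: (List.range k).map b := by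
  rw [List.range_succ_eq_map]
  simp only [List.map_cons, List.map_map, Function.comp_def]
  congr 1
  exact List.map_congr_left (fun i _ => b_two_add i)

lemma cf_main (k : ℕ) :
    cfList ((List.range (k + 1)).map b) = s (k + 2) / s (k + 1) ∧
    cfList ((List.range (k + 1)).map (fun i => b (i + 1))) =
      -U⁻¹ * (s (k + 2) / s (k + 1)) := by
  induction k with
  | zero =>
    have h2 : s 2 = T := by
      have := s_rec 0
      rw [this, s_zero, s_one]; ring
    constructor
    · simp [cfList, b_zero, h2, s_one]
    · simp [cfList, b_one, h2, s_one]
  | succ k ih =>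
    have hs1 : s (k + 1) ≠ 0 := s_ne _ (by omega)
    have hs2 : s (k + 1 + 1) ≠ 0 := s_ne _ (by omega)
    have hrec := s_rec (k + 1)
    have hs1' : s (1 + k) ≠ 0 := by rw [add_comm]; exact hs1
    have hs2' : s (2 + k) ≠ 0 := by
      have e : 2 + k = k + 1 + 1 := by omega
      rw [e]; exact hs2
    constructor
    · rw [Lb_succ (k + 1), Lc_succ k, cfList_cons, ← Lc_succ k, ih.2, b_zero, hrec]
      field_simp [U_ne, hs1, hs2, hs1', hs2']
      ring
    · rw [Lc_succ (k + 1), Lb_succ k, cfList_cons, ← Lb_succ k, ih.1, b_one, hrec]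
      field_simp [U_ne, hs1, hs2, hs1', hs2']
      ring

theorem stmt_9 (n : ℕ) :
    F^[n] T = cfList ((List.range (2 ^ n)).map b) := by
  have key : ∀ m : ℕ, F^[m] T = s (2 ^ m + 1) / s (2 ^ m) := by
    intro m
    induction m with
    | zero =>
      have h2 : s 2 = T := by
        have := s_rec 0
        rw [this, s_zero, s_one]; ring
      simp [h2, s_one]
    | succ m ih =>
      rw [Function.iterate_succ_apply', ih, F_double _ (Nat.one_le_two_pow)]
      have e : 2 * 2 ^ m = 2 ^ (m + 1) := by rw [pow_succ]; ring
      rw [e]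
  obtain ⟨j, hj⟩ : ∃ j, 2 ^ n = j + 1 := ⟨2 ^ n - 1, by have := Nat.one_le_two_pow (n := n); omega⟩
  rw [key, hj, (cf_main j).1]

end Paper
end
end
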